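/- Let D=(V,E) be a finite multidigraph and let e be an arc of D. If e is a loop then σ̂π(D;x,y,z) = σ̂π(D_{-e};x,y,z) + x·y·σ̂π(D_{/e};x,y,z); if e is not a loop then σ̂π(D;x,y,z) = σ̂π(D_{-e};x,y,z) + x·σ̂π(D_{/e};x,y,z) + x·(z−1)·σ̂π(D_{†e};x,y,z). Moreover σ̂π(E_n;x,y,z)=1 for every arc-less digraph E_n. -/

import Mathlib

open Classical

/-- A finite multidigraph: a finite set `V` of vertices (natural numbers),
a finite set `A` of arc identifiers, and a map `ends` assigning to each arc
identifier its (source, target) pair of vertices.  Parallel arcs are distinct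
identifiers with the same endpoints; loops are arcs with equal endpoints. -/
structure MDigraph where
  V : Finset ℕ
  A : Finset ℕ
  ends : ℕ → ℕ × ℕ

namespace MDigraph

/-- Every arc has both endpoints in the vertex set. -/
def WellFormed (D : MDigraph) : Prop :=
  ∀ a ∈ D.A, (D.ends a).1 ∈ D.V ∧ (D.ends a).2 ∈ D.V

/-- An arc is a loop if its source equals its target. -/
def IsLoop (D : MDigraph) (e : ℕ) : Prop := (D.ends e).1 = (D.ends e).2

/-- Arc deletion `D_{-e}`. -/
def delArc (D : MDigraph) (e : ℕ) : MDigraph := ⟨D.V, D.A.erase e, D.ends⟩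

/-- Arc contraction `D_{/e}`.  For a non-loop arc `e = (u,v)`: merge `u` and `v`
into a single vertex (named `u`), removing exactly the arcs of the form `(u,x)`
and `(y,v)`.  For a loop `e = (u,u)`: delete `u` together with all incident arcs. -/
noncomputable def contractArc (D : MDigraph) (e : ℕ) : MDigraph :=
  let u := (D.ends e).1
  let v := (D.ends e).2
  if u = v then
    ⟨D.V.erase u, D.A.filter (fun a => (D.ends a).1 ≠ u ∧ (D.ends a).2 ≠ u), D.ends⟩
  else
    ⟨D.V.erase v, D.A.filter (fun a => (D.ends a).1 ≠ u ∧ (D.ends a).2 ≠ v),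
      fun a => ((if (D.ends a).1 = v then u else (D.ends a).1),
                (if (D.ends a).2 = v then u else (D.ends a).2))⟩

/-- Arc extraction `D_{†e}`: delete both endpoints of `e` and all arcs incident to them. -/
noncomputable def extractArc (D : MDigraph) (e : ℕ) : MDigraph :=
  let u := (D.ends e).1
  let v := (D.ends e).2
  ⟨(D.V.erase u).erase v,
   D.A.filter (fun a =>
     (D.ends a).1 ≠ u ∧ (D.ends a).1 ≠ v ∧ (D.ends a).2 ≠ u ∧ (D.ends a).2 ≠ v),
   D.ends⟩

/-- Add one new arc with endpoints `p` (using a fresh arc identifier). -/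
noncomputable def addArc (D : MDigraph) (p : ℕ × ℕ) : MDigraph :=
  ⟨D.V, insert (D.A.sup id + 1) D.A, Function.update D.ends (D.A.sup id + 1) p⟩

/-- Vertex deletion `D_{-v}`. -/
noncomputable def delVertex (D : MDigraph) (v : ℕ) : MDigraph :=
  ⟨D.V.erase v, D.A.filter (fun a => (D.ends a).1 ≠ v ∧ (D.ends a).2 ≠ v), D.ends⟩

/-- Vertex contraction `D_{/v}`: delete `v`, and for every arc `(u,v)` into `v`
and every arc `(v,w)` out of `v` add a new arc `(u,w)`; thus the multiplicity of
a new arc `(u,w)` is the multiplicity of `(u,v)` times that of `(v,w)`. -/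
noncomputable def contractVertex (D : MDigraph) (v : ℕ) : MDigraph :=
  ⟨D.V.erase v,
   ((D.A.filter (fun a => (D.ends a).1 ≠ v ∧ (D.ends a).2 ≠ v)).image (fun a => 2 * a)) ∪
     (((D.A.filter (fun a => (D.ends a).2 = v)) ×ˢ (D.A.filter (fun a => (D.ends a).1 = v))).image
       (fun p => 2 * Nat.pair p.1 p.2 + 1)),
   fun n =>
     if n % 2 = 0 then D.ends (n / 2)
     else ((D.ends (Nat.unpair ((n - 1) / 2)).1).1, (D.ends (Nat.unpair ((n - 1) / 2)).2).2)⟩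

/-- The arc-less digraph on `n` vertices. -/
def emptyD (n : ℕ) : MDigraph := ⟨Finset.range n, ∅, fun _ => (0, 0)⟩

/-- Disjoint union of two multidigraphs (vertices and arcs relabelled evenly/oddly). -/
noncomputable def disjUnion (D₁ D₂ : MDigraph) : MDigraph :=
  ⟨(D₁.V.image (fun v => 2 * v)) ∪ (D₂.V.image (fun v => 2 * v + 1)),
   (D₁.A.image (fun a => 2 * a)) ∪ (D₂.A.image (fun a => 2 * a + 1)),
   fun n =>
     if n % 2 = 0 then (2 * (D₁.ends (n / 2)).1, 2 * (D₁.ends (n / 2)).2)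
     else (2 * (D₂.ends (n / 2)).1 + 1, 2 * (D₂.ends (n / 2)).2 + 1)⟩

/-- Isomorphism of multidigraphs. -/
def Iso (D₁ D₂ : MDigraph) : Prop :=
  ∃ φ ψ : ℕ → ℕ, Set.BijOn φ ↑D₁.V ↑D₂.V ∧ Set.BijOn ψ ↑D₁.A ↑D₂.A ∧
    ∀ a ∈ D₁.A, D₂.ends (ψ a) = (φ (D₁.ends a).1, φ (D₁.ends a).2)

/-- `C` is (the arc set of) a directed cycle of length `k` in `D`: `k` distinct arcs
forming a closed directed walk through `k` distinct vertices (`k ≥ 1`;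
a loop is a directed cycle of length 1). -/
def IsCycle (D : MDigraph) (C : Finset ℕ) (k : ℕ) : Prop :=
  1 ≤ k ∧ ∃ v a : ℕ → ℕ,
    (∀ i j, i < k → j < k → v i = v j → i = j) ∧
    (∀ i j, i < k → j < k → a i = a j → i = j) ∧
    (∀ i, i < k → a i ∈ D.A ∧ D.ends (a i) = (v i, v ((i + 1) % k))) ∧
    C = (Finset.range k).image a

/-- `P` is (the arc set of) a directed path of length `k` in `D`: `k` distinct arcs
forming a directed walk through `k+1` distinct vertices (`k ≥ 1`). -/
def IsPath (D : MDigraph) (P : Finset ℕ) (k : ℕ) : Prop :=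
  1 ≤ k ∧ ∃ v a : ℕ → ℕ,
    (∀ i j, i ≤ k → j ≤ k → v i = v j → i = j) ∧
    (∀ i j, i < k → j < k → a i = a j → i = j) ∧
    (∀ i, i < k → a i ∈ D.A ∧ D.ends (a i) = (v i, v (i + 1))) ∧
    P = (Finset.range k).image a

/-- Number `c_k(D)` of directed cycles of length `k`. -/
noncomputable def cycCount (D : MDigraph) (k : ℕ) : ℕ :=
  (D.A.powerset.filter (fun C => IsCycle D C k)).card

/-- Number `p_k(D)` of directed paths of length `k`. -/
noncomputable def pathCount (D : MDigraph) (k : ℕ) : ℕ :=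
  (D.A.powerset.filter (fun P => IsPath D P k)).card

/-- The cycle polynomial `σ(D;x) = ∑_k c_k(D) x^k`. -/
noncomputable def cyclePoly (D : MDigraph) : Polynomial ℝ :=
  ∑ k ∈ Finset.range (D.A.card + 1), (cycCount D k : ℝ) • Polynomial.X ^ k

/-- The path polynomial `π(D;x) = ∑_k p_k(D) x^k`. -/
noncomputable def pathPoly (D : MDigraph) : Polynomial ℝ :=
  ∑ k ∈ Finset.range (D.A.card + 1), (pathCount D k : ℝ) • Polynomial.X ^ k


/-- Out-degree of `v`: arcs with tail `v`, counted with multiplicity. -/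
noncomputable def outDeg (D : MDigraph) (v : ℕ) : ℕ :=
  (D.A.filter (fun a => (D.ends a).1 = v)).card

/-- In-degree of `v`: arcs with head `v`, counted with multiplicity. -/
noncomputable def inDeg (D : MDigraph) (v : ℕ) : ℕ :=
  (D.A.filter (fun a => (D.ends a).2 = v)).card

/-- `P` is a directed path of length `k` in `D` beginning at `v0`. -/
def IsPathFrom (D : MDigraph) (v0 : ℕ) (P : Finset ℕ) (k : ℕ) : Prop :=
  1 ≤ k ∧ ∃ v a : ℕ → ℕ, v 0 = v0 ∧
    (∀ i j, i ≤ k → j ≤ k → v i = v j → i = j) ∧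
    (∀ i j, i < k → j < k → a i = a j → i = j) ∧
    (∀ i, i < k → a i ∈ D.A ∧ D.ends (a i) = (v i, v (i + 1))) ∧
    P = (Finset.range k).image a

/-- `P` is a directed path of length `k` in `D` ending at `v0`. -/
def IsPathTo (D : MDigraph) (v0 : ℕ) (P : Finset ℕ) (k : ℕ) : Prop :=
  1 ≤ k ∧ ∃ v a : ℕ → ℕ, v k = v0 ∧
    (∀ i j, i ≤ k → j ≤ k → v i = v j → i = j) ∧
    (∀ i j, i < k → j < k → a i = a j → i = j) ∧
    (∀ i, i < k → a i ∈ D.A ∧ D.ends (a i) = (v i, v (i + 1))) ∧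
    P = (Finset.range k).image a

/-- `p_k(D,v,+)`: number of directed paths of length `k` beginning at `v`. -/
noncomputable def pathFromCount (D : MDigraph) (v : ℕ) (k : ℕ) : ℕ :=
  (D.A.powerset.filter (fun P => IsPathFrom D v P k)).card

/-- `p_k(D,v,−)`: number of directed paths of length `k` ending at `v`. -/
noncomputable def pathToCount (D : MDigraph) (v : ℕ) (k : ℕ) : ℕ :=
  (D.A.powerset.filter (fun P => IsPathTo D v P k)).card

/-- `π_{v+}(D;x) = ∑_k p_k(D,v,+) x^k`. -/
noncomputable def pathFromPoly (D : MDigraph) (v : ℕ) : Polynomial ℝ :=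
  ∑ k ∈ Finset.range (D.A.card + 1), (pathFromCount D v k : ℝ) • Polynomial.X ^ k

/-- `π_{v-}(D;x) = ∑_k p_k(D,v,−) x^k`. -/
noncomputable def pathToPoly (D : MDigraph) (v : ℕ) : Polynomial ℝ :=
  ∑ k ∈ Finset.range (D.A.card + 1), (pathToCount D v k : ℝ) • Polynomial.X ^ k

/-- In the spanning subgraph `D⟨F⟩`, every vertex has out-degree ≤ 1 and
in-degree ≤ 1; equivalently, every component of `D⟨F⟩` is a directed cycle,
a directed path, or an isolated vertex. -/
def DegOK (D : MDigraph) (F : Finset ℕ) : Prop :=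
  ∀ w : ℕ, (F.filter (fun a => (D.ends a).1 = w)).card ≤ 1 ∧
    (F.filter (fun a => (D.ends a).2 = w)).card ≤ 1

/-- `kc(D⟨F⟩)`: the number of components of the spanning subgraph `D⟨F⟩` that are
directed cycles (for degree-constrained `F`, these are exactly the directed
cycles contained in `F`). -/
noncomputable def kcF (D : MDigraph) (F : Finset ℕ) : ℕ :=
  (F.powerset.filter (fun C => ∃ k, IsCycle D C k)).card

/-- `kp(D⟨F⟩)`: the number of components of the spanning subgraph `D⟨F⟩` that are
directed paths with at least one arc (for degree-constrained `F`, counted by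
their initial vertices: vertices that are the tail of an arc of `F` but the
head of no arc of `F`). -/
noncomputable def kpF (D : MDigraph) (F : Finset ℕ) : ℕ :=
  ((F.image (fun a => (D.ends a).1)).filter
    (fun w => (F.filter (fun a => (D.ends a).2 = w)).card = 0)).card

/-- The number of vertices covered by (incident to) the arcs of `F`. -/
noncomputable def coveredCard (D : MDigraph) (F : Finset ℕ) : ℕ :=
  ((F.image (fun a => (D.ends a).1)) ∪ (F.image (fun a => (D.ends a).2))).card

/-- `k(D⟨F⟩)`: total number of connected components of the spanning subgraph
`D⟨F⟩` (isolated vertices included), for degree-constrained `F` in a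
well-formed digraph. -/
noncomputable def kF (D : MDigraph) (F : Finset ℕ) : ℕ :=
  D.V.card - coveredCard D F + kcF D F + kpF D F

/-- `c(D⟨F⟩)`: number of covered components (components with at least one arc). -/
noncomputable def cF (D : MDigraph) (F : Finset ℕ) : ℕ := kcF D F + kpF D F

/-- `c₁(D⟨F⟩)`: number of loops in `F`. -/
noncomputable def loopCount (D : MDigraph) (F : Finset ℕ) : ℕ :=
  (F.filter (fun a => (D.ends a).1 = (D.ends a).2)).card

/-- The bivariate cycle polynomial
`σ̂(D;x,y) = ∑_F x^{|F|} y^{kc(D⟨F⟩)}`, the sum being over all arc subsets `F`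
such that every component of `D⟨F⟩` is a directed cycle or an isolated vertex. -/
noncomputable def biCycPoly (D : MDigraph) : MvPolynomial (Fin 2) ℝ :=
  ∑ F ∈ D.A.powerset.filter (fun F => DegOK D F ∧ kpF D F = 0),
    MvPolynomial.X 0 ^ F.card * MvPolynomial.X 1 ^ kcF D F

/-- The bivariate path polynomial
`π̂(D;x,y) = ∑_F x^{|F|} y^{kp(D⟨F⟩)}`, the sum being over all arc subsets `F`
such that every component of `D⟨F⟩` is a directed path or an isolated vertex. -/
noncomputable def biPathPoly (D : MDigraph) : MvPolynomial (Fin 2) ℝ :=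
  ∑ F ∈ D.A.powerset.filter (fun F => DegOK D F ∧ kcF D F = 0),
    MvPolynomial.X 0 ^ F.card * MvPolynomial.X 1 ^ kpF D F

/-- The trivariate cycle-path polynomial
`σ̂π(D;x,y,z) = ∑_F x^{|F|} y^{kc(D⟨F⟩)} z^{kp(D⟨F⟩)}`, the sum being over all
arc subsets `F` in which every vertex has in- and out-degree at most 1. -/
noncomputable def triPoly (D : MDigraph) : MvPolynomial (Fin 3) ℝ :=
  ∑ F ∈ D.A.powerset.filter (fun F => DegOK D F),
    MvPolynomial.X 0 ^ F.card * MvPolynomial.X 1 ^ kcF D F * MvPolynomial.X 2 ^ kpF D F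

/-- The geometric cover polynomial `C̃(D;x,y) = ∑_{i,j} c_{i,j}(D) x^i y^j`,
where `c_{i,j}(D)` is the number of ways of disjointly covering all vertices of
`D` with `i` directed paths and `j` directed cycles (isolated vertices counting
as paths of length 0): a cover is an arc subset `F` with all in- and out-degrees
at most 1, contributing `j = kc(D⟨F⟩)` cycles and
`i = kp(D⟨F⟩) + (number of uncovered vertices)` paths. -/
noncomputable def geomCover (D : MDigraph) (x y : ℝ) : ℝ :=
  ∑ F ∈ D.A.powerset.filter (fun F => DegOK D F),
    x ^ (kpF D F + (D.V.card - coveredCard D F)) * y ^ kcF D F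

/-- No vertex is incident both to an arc of `A` and to an arc of `B`. -/
def NoCommonVertex (D : MDigraph) (A B : Finset ℕ) : Prop :=
  ∀ a ∈ A, ∀ b ∈ B,
    (D.ends a).1 ≠ (D.ends b).1 ∧ (D.ends a).1 ≠ (D.ends b).2 ∧
    (D.ends a).2 ≠ (D.ends b).1 ∧ (D.ends a).2 ≠ (D.ends b).2

/-- The explicit polynomial
`N(D;x,y,z) = ∑_{(A,B)} x^{k(D⟨A∪B⟩)−c(D⟨B⟩)−c₁(D⟨A⟩)} y^{|A|+|B|−c(D⟨B⟩)} z^{c(D⟨B⟩)}`,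
summing over pairs of disjoint arc subsets `A, B` sharing no vertex such that
every component of `D⟨A∪B⟩` is a directed cycle, a directed path or an isolated
vertex. -/
noncomputable def NPoly (D : MDigraph) : MvPolynomial (Fin 3) ℝ :=
  ∑ p ∈ (D.A.powerset ×ˢ D.A.powerset).filter
      (fun p => Disjoint p.1 p.2 ∧ NoCommonVertex D p.1 p.2 ∧ DegOK D (p.1 ∪ p.2)),
    MvPolynomial.X 0 ^ (kF D (p.1 ∪ p.2) - cF D p.2 - loopCount D p.1) *
      MvPolynomial.X 1 ^ (p.1.card + p.2.card - cF D p.2) *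
      MvPolynomial.X 2 ^ cF D p.2

end MDigraph

/-- A finite undirected graph: a finite vertex set and a finite set of
unordered pairs as edges. -/
structure SGraph where
  V : Finset ℕ
  E : Finset (Sym2 ℕ)

namespace SGraph

/-- `G` is a simple graph: no loops, and all edge endpoints are vertices. -/
def Simple (G : SGraph) : Prop :=
  (∀ s ∈ G.E, ¬ s.IsDiag) ∧ ∀ s ∈ G.E, ∀ a ∈ s, a ∈ G.V

/-- `P` is (the edge set of) an undirected path of length `k` in `G`. -/
def IsUPath (G : SGraph) (P : Finset (Sym2 ℕ)) (k : ℕ) : Prop :=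
  1 ≤ k ∧ ∃ v : ℕ → ℕ,
    (∀ i j, i ≤ k → j ≤ k → v i = v j → i = j) ∧
    (∀ i, i < k → s(v i, v (i + 1)) ∈ G.E) ∧
    P = (Finset.range k).image (fun i => s(v i, v (i + 1)))

/-- `C` is (the edge set of) an undirected cycle of length `k ≥ 3` in `G`. -/
def IsUCycle (G : SGraph) (C : Finset (Sym2 ℕ)) (k : ℕ) : Prop :=
  3 ≤ k ∧ ∃ v : ℕ → ℕ,
    (∀ i j, i < k → j < k → v i = v j → i = j) ∧
    (∀ i, i < k → s(v i, v ((i + 1) % k)) ∈ G.E) ∧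
    C = (Finset.range k).image (fun i => s(v i, v ((i + 1) % k)))

/-- `p_k(G)`: number of undirected paths of length `k` in `G`. -/
noncomputable def uPathCount (G : SGraph) (k : ℕ) : ℕ :=
  (G.E.powerset.filter (fun P => IsUPath G P k)).card

/-- `c_k(G)`: number of undirected cycles of length `k` in `G`. -/
noncomputable def uCycCount (G : SGraph) (k : ℕ) : ℕ :=
  (G.E.powerset.filter (fun C => IsUCycle G C k)).card

/-- `π(G;x) = ∑_k p_k(G) x^k`. -/
noncomputable def uPathPoly (G : SGraph) : Polynomial ℝ :=
  ∑ k ∈ Finset.range (G.E.card + 1), (uPathCount G k : ℝ) • Polynomial.X ^ k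

/-- `σ(G;x) = ∑_k c_k(G) x^k`. -/
noncomputable def uCycPoly (G : SGraph) : Polynomial ℝ :=
  ∑ k ∈ Finset.range (G.E.card + 1), (uCycCount G k : ℝ) • Polynomial.X ^ k

/-- The digraph `D(G)` obtained from `G` by replacing each edge `{u,v}` by the
two oppositely oriented arcs `(u,v)` and `(v,u)`. -/
noncomputable def toDigraph (G : SGraph) : MDigraph :=
  ⟨G.V, ((G.V ×ˢ G.V).filter (fun p => s(p.1, p.2) ∈ G.E)).image (fun p => Nat.pair p.1 p.2),
   Nat.unpair⟩

end SGraph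


/-!
Split the degree-constrained arc sets `F` of `D` according to whether `e ∈ F`. Those avoiding
`e` are exactly the degree-constrained arc sets of `D_{-e}`. If `e ∈ F`, no other arc of `F`
leaves the tail `u` or enters the head `v` of `e`, so `F ↦ F \ {e}` is a bijection onto the
degree-constrained arc sets of `D_{/e}`. A loop `e` is a cycle component of its own and
contributes the factor `x y`. For a non-loop `e`, contracting `e` maps the component of `e` to a
component of the same kind (a cycle through `e` becomes a cycle through the merged vertex, a path
stays a path), except when `e` alone is a path component, i.e. when `F \ {e}` is an arc set of
`D_{†e}`: then a path disappears, which is the correction term `x (z - 1) σ̂π(D_{†e})`.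
-/

namespace MDigraph

open Finset MvPolynomial

/-- The vertex map of the contraction of an arc `(u, v)`, which merges `v` into `u`. -/
def identify (u v w : ℕ) : ℕ := if w = v then u else w

section identify

variable {u v w : ℕ}

@[simp] lemma identify_right : identify u v v = u := if_pos rfl

@[simp] lemma identify_same : identify u u w = w := by
  unfold identify; split_ifs with h <;> simp [h]

lemma identify_of_ne (h : w ≠ v) : identify u v w = w := if_neg h

lemma identify_injOn : Set.InjOn (identify u v) {w | w ≠ u} := by
  intro x hx y hy h
  simp only [identify] at h
  split_ifs at h <;> simp_all

lemma card_insert_sdiff_insert_identify {T H : Finset ℕ} (huv : u ≠ v) (hu : u ∉ T) :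
    #(insert u T \ insert v H) =
      #(T.image (identify u v) \ H) + if u ∉ H ∧ v ∉ T then 1 else 0 := by
  by_cases hvT : v ∈ T
  · rw [if_neg (by tauto), add_zero]
    congr 1
    ext x
    simp only [mem_sdiff, mem_insert, mem_image, identify]
    grind
  · have hT : T.image (identify u v) = T := by
      rw [image_congr fun x hx => identify_of_ne fun (h : x = v) => hvT (h ▸ hx), image_id']
    rw [hT]
    by_cases huH : u ∈ H
    · rw [if_neg (by tauto), add_zero]
      congr 1
      ext x
      simp only [mem_sdiff, mem_insert]
      grind
    · rw [if_pos ⟨huH, hvT⟩, ← card_insert_of_notMem fun h => hu (mem_sdiff.mp h).1]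
      congr 1
      ext x
      simp only [mem_sdiff, mem_insert]
      grind

end identify

lemma injOn_add_mod (k s : ℕ) : Set.InjOn (fun i => (i + s) % k) (Set.Iio k) :=
  fun i hi j hj h => by
    have h' : i % k = j % k := Nat.ModEq.add_right_cancel' s h
    rwa [Nat.mod_eq_of_lt hi, Nat.mod_eq_of_lt hj] at h'

lemma image_range_add_mod (k s : ℕ) : (range k).image (fun i => (i + s) % k) = range k := by
  rcases k.eq_zero_or_pos with rfl | hk
  · simp
  refine eq_of_subset_of_card_le (fun x hx => ?_) ?_
  · obtain ⟨i, -, rfl⟩ := mem_image.mp hx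
    exact mem_range.mpr (Nat.mod_lt _ hk)
  · rw [card_image_of_injOn (by simpa using injOn_add_mod k s)]

lemma sum_mul_ite_eq {ι R : Type*} [CommRing R] (s : Finset ι) (p : ι → Prop) [DecidablePred p]
    (f : ι → R) (c z : R) :
    ∑ i ∈ s, c * f i * (if p i then z else 1) =
      c * ∑ i ∈ s, f i + c * (z - 1) * ∑ i ∈ s.filter p, f i := by
  rw [sum_filter, mul_sum, mul_sum, ← sum_add_distrib]
  exact sum_congr rfl fun i _ => by split_ifs <;> ring

def tails (D : MDigraph) (F : Finset ℕ) : Finset ℕ := F.image fun a => (D.ends a).1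

def heads (D : MDigraph) (F : Finset ℕ) : Finset ℕ := F.image fun a => (D.ends a).2

lemma tails_insert {D : MDigraph} {e : ℕ} {F : Finset ℕ} :
    D.tails (insert e F) = insert (D.ends e).1 (D.tails F) := image_insert ..

lemma heads_insert {D : MDigraph} {e : ℕ} {F : Finset ℕ} :
    D.heads (insert e F) = insert (D.ends e).2 (D.heads F) := image_insert ..

lemma kpF_eq_card_sdiff (D : MDigraph) (F : Finset ℕ) :
    kpF D F = #(D.tails F \ D.heads F) := by
  unfold kpF tails heads
  congr 1
  ext w
  simp [filter_eq_empty_iff]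

lemma degOK_iff_injOn (D : MDigraph) (F : Finset ℕ) :
    DegOK D F ↔ Set.InjOn (fun a => (D.ends a).1) F ∧ Set.InjOn (fun a => (D.ends a).2) F := by
  simp only [DegOK, card_le_one, mem_filter, Set.InjOn, mem_coe]
  exact ⟨fun h => ⟨fun a ha b hb hab => (h _).1 a ⟨ha, rfl⟩ b ⟨hb, hab.symm⟩,
      fun a ha b hb hab => (h _).2 a ⟨ha, rfl⟩ b ⟨hb, hab.symm⟩⟩,
    fun h w => ⟨fun a ha b hb => h.1 ha.1 hb.1 (ha.2.trans hb.2.symm),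
      fun a ha b hb => h.2 ha.1 hb.1 (ha.2.trans hb.2.symm)⟩⟩

lemma DegOK.mono {D : MDigraph} {F F' : Finset ℕ} (h : DegOK D F) (hF' : F' ⊆ F) :
    DegOK D F' := by
  rw [degOK_iff_injOn] at h ⊢
  exact ⟨h.1.mono (coe_subset.mpr hF'), h.2.mono (coe_subset.mpr hF')⟩

/-- A cycle of length `k` given as a closed walk: unlike in `IsCycle`, the vertex `v k` closing
the walk is listed, so no index is reduced modulo `k`. -/
structure IsCycleParam (D : MDigraph) (k : ℕ) (v a : ℕ → ℕ) : Prop where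
  injOn_vert : Set.InjOn v (Set.Iio k)
  injOn_arc : Set.InjOn a (Set.Iio k)
  mem_A : ∀ i < k, a i ∈ D.A
  ends_eq : ∀ i < k, D.ends (a i) = (v i, v (i + 1))
  closed : v k = v 0

namespace IsCycleParam

variable {D : MDigraph} {k : ℕ} {v a : ℕ → ℕ}

lemma apply_mod_add_one (hp : IsCycleParam D k v a) (hk : 1 ≤ k) (j : ℕ) :
    v (j % k + 1) = v ((j + 1) % k) := by
  rw [← Nat.mod_add_mod j k 1]
  rcases Nat.lt_or_eq_of_le (show j % k + 1 ≤ k from Nat.mod_lt j hk) with h | h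
  · rw [Nat.mod_eq_of_lt h]
  · rw [h, Nat.mod_self, hp.closed]

lemma isCycle (hp : IsCycleParam D k v a) (hk : 1 ≤ k) :
    IsCycle D ((range k).image a) k := by
  refine ⟨hk, v, a, fun i j hi hj h => hp.injOn_vert hi hj h,
    fun i j hi hj h => hp.injOn_arc hi hj h, fun i hi => ⟨hp.mem_A i hi, ?_⟩, rfl⟩
  rw [hp.ends_eq i hi, ← hp.apply_mod_add_one hk, Nat.mod_eq_of_lt hi]

lemma rotate (hp : IsCycleParam D k v a) (hk : 1 ≤ k) (s : ℕ) :
    IsCycleParam D k (fun i => v ((i + s) % k)) (fun i => a ((i + s) % k)) where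
  injOn_vert := hp.injOn_vert.comp (injOn_add_mod k s) fun i _ => Nat.mod_lt _ hk
  injOn_arc := hp.injOn_arc.comp (injOn_add_mod k s) fun i _ => Nat.mod_lt _ hk
  mem_A i _ := hp.mem_A _ (Nat.mod_lt _ hk)
  ends_eq i _ := by
    rw [hp.ends_eq _ (Nat.mod_lt _ hk), hp.apply_mod_add_one hk, Nat.add_right_comm]
  closed := by simp

lemma tails_eq_heads (hp : IsCycleParam D k v a) (hk : 1 ≤ k) :
    D.tails ((range k).image a) = D.heads ((range k).image a) := by
  have htails : D.tails ((range k).image a) = (range k).image v := by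
    unfold tails
    rw [image_image]
    exact image_congr fun i hi => by simp [hp.ends_eq i (mem_range.mp hi)]
  have hheads : D.heads ((range k).image a) = (range k).image (fun i => v (i + 1)) := by
    unfold heads
    rw [image_image]
    exact image_congr fun i hi => by simp [hp.ends_eq i (mem_range.mp hi)]
  obtain ⟨n, rfl⟩ : ∃ n, k = n + 1 := ⟨k - 1, by omega⟩
  rw [htails, hheads]
  conv_lhs => rw [range_add_one', image_insert, map_eq_image, image_image]
  rw [range_add_one, image_insert, hp.closed]
  rfl

end IsCycleParam

namespace IsCycle

variable {D : MDigraph} {C : Finset ℕ} {k : ℕ}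

lemma exists_param (h : IsCycle D C k) :
    ∃ v a, IsCycleParam D k v a ∧ C = (range k).image a := by
  obtain ⟨hk, v, a, hv, ha, harc, rfl⟩ := h
  refine ⟨fun i => v (i % k), a, ⟨fun i hi j hj h => ?_, fun i hi j hj h => ha i j hi hj h,
    fun i hi => (harc i hi).1, fun i hi => ?_, by simp⟩, rfl⟩
  · simp only [Nat.mod_eq_of_lt (Set.mem_Iio.mp hi), Nat.mod_eq_of_lt (Set.mem_Iio.mp hj)] at h
    exact hv i j hi hj h
  · rw [(harc i hi).2, Nat.mod_eq_of_lt hi]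

lemma exists_param_last (h : IsCycle D C k) {x : ℕ} (hx : x ∈ C) :
    ∃ v a, IsCycleParam D k v a ∧ C = (range k).image a ∧ a (k - 1) = x := by
  obtain ⟨v, a, hp, rfl⟩ := h.exists_param
  obtain ⟨j, hj, rfl⟩ := mem_image.mp hx
  have hk : 1 ≤ k := h.1
  refine ⟨_, _, hp.rotate hk (j + 1), ?_, ?_⟩
  · conv_lhs => rw [← image_range_add_mod k (j + 1), image_image]
    rfl
  · have : k - 1 + (j + 1) = j + k := by omega
    simp only [this, Nat.add_mod_right, Nat.mod_eq_of_lt (mem_range.mp hj)]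

lemma tails_eq_heads (h : IsCycle D C k) : D.tails C = D.heads C := by
  obtain ⟨v, a, hp, rfl⟩ := h.exists_param
  exact hp.tails_eq_heads h.1

lemma subset_A (h : IsCycle D C k) : C ⊆ D.A := by
  obtain ⟨v, a, hp, rfl⟩ := h.exists_param
  intro x hx
  obtain ⟨i, hi, rfl⟩ := mem_image.mp hx
  exact hp.mem_A i (mem_range.mp hi)

lemma congr {D' : MDigraph} (h : IsCycle D C k) (hA : C ⊆ D'.A)
    (hends : ∀ a ∈ C, D'.ends a = D.ends a) : IsCycle D' C k := by
  obtain ⟨hk, v, a, hv, ha, harc, rfl⟩ := h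
  have hmem : ∀ i < k, a i ∈ (range k).image a :=
    fun i hi => mem_image_of_mem a (mem_range.mpr hi)
  exact ⟨hk, v, a, hv, ha,
    fun i hi => ⟨hA (hmem i hi), (hends _ (hmem i hi)).trans (harc i hi).2⟩, rfl⟩

lemma eq_singleton_of_isLoop (h : IsCycle D C k) {e : ℕ} (heC : e ∈ C) (hl : D.IsLoop e) :
    C = {e} := by
  obtain ⟨v, a, hp, rfl, hlast⟩ := h.exists_param_last heC
  have hk : 1 ≤ k := h.1
  have hends := hp.ends_eq (k - 1) (by omega)
  rw [hlast, show k - 1 + 1 = k by omega, hp.closed] at hends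
  have hk1 : k - 1 = 0 := hp.injOn_vert (show k - 1 < k by omega) (show 0 < k by omega)
    (by simpa [IsLoop, hends] using hl)
  rw [show k = 0 + 1 by omega, range_one, image_singleton, ← hlast, hk1]

end IsCycle

lemma isCycle_singleton_of_isLoop {D : MDigraph} {e : ℕ} (he : e ∈ D.A) (hl : D.IsLoop e) :
    IsCycle D {e} 1 := by
  have hp : IsCycleParam D 1 (fun _ => (D.ends e).1) (fun _ => e) :=
    ⟨fun i hi j hj _ => by simp_all, fun i hi j hj _ => by simp_all, fun _ _ => he,
      fun _ _ => Prod.ext rfl hl.symm, rfl⟩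
  simpa using hp.isCycle le_rfl

section congr

variable {D D' : MDigraph} {F : Finset ℕ}

lemma tails_congr (h : ∀ a ∈ F, D.ends a = D'.ends a) : D.tails F = D'.tails F :=
  image_congr fun a ha => by simp [h a ha]

lemma heads_congr (h : ∀ a ∈ F, D.ends a = D'.ends a) : D.heads F = D'.heads F :=
  image_congr fun a ha => by simp [h a ha]

lemma kpF_congr (h : ∀ a ∈ F, D.ends a = D'.ends a) : kpF D F = kpF D' F := by
  rw [kpF_eq_card_sdiff, kpF_eq_card_sdiff, tails_congr h, heads_congr h]

lemma kcF_congr (hA : F ⊆ D.A) (hA' : F ⊆ D'.A) (h : ∀ a ∈ F, D.ends a = D'.ends a) :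
    kcF D F = kcF D' F := by
  unfold kcF
  congr 1
  refine filter_congr fun C hC => exists_congr fun k => ?_
  have hCF := mem_powerset.mp hC
  exact ⟨fun hc => hc.congr (hCF.trans hA') fun a ha => (h a (hCF ha)).symm,
    fun hc => hc.congr (hCF.trans hA) fun a ha => h a (hCF ha)⟩

end congr

section contractArc

variable {D : MDigraph} {e : ℕ}

variable (D e) in
lemma contractArc_A : (D.contractArc e).A =
    D.A.filter fun a => (D.ends a).1 ≠ (D.ends e).1 ∧ (D.ends a).2 ≠ (D.ends e).2 := by
  dsimp only [contractArc]
  split_ifs with h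
  · simp [h]
  · rfl

variable (D e) in
lemma contractArc_ends (a : ℕ) : (D.contractArc e).ends a =
    (identify (D.ends e).1 (D.ends e).2 (D.ends a).1,
      identify (D.ends e).1 (D.ends e).2 (D.ends a).2) := by
  dsimp only [contractArc]
  split_ifs with h
  · simp [h]
  · rfl

lemma mem_contractArc_A {a : ℕ} : a ∈ (D.contractArc e).A ↔
    a ∈ D.A ∧ (D.ends a).1 ≠ (D.ends e).1 ∧ (D.ends a).2 ≠ (D.ends e).2 := by
  rw [contractArc_A, mem_filter]

lemma contractArc_ends_of_mem {a : ℕ} (ha : a ∈ (D.contractArc e).A) :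
    (D.contractArc e).ends a =
      (identify (D.ends e).1 (D.ends e).2 (D.ends a).1, (D.ends a).2) := by
  rw [contractArc_ends, identify_of_ne (mem_contractArc_A.mp ha).2.2]

lemma notMem_tails_of_subset_contractArc_A {F : Finset ℕ} (hF : F ⊆ (D.contractArc e).A) :
    (D.ends e).1 ∉ D.tails F := by
  simpa [tails] using fun a ha => (mem_contractArc_A.mp (hF ha)).2.1

lemma notMem_heads_of_subset_contractArc_A {F : Finset ℕ} (hF : F ⊆ (D.contractArc e).A) :
    (D.ends e).2 ∉ D.heads F := by
  simpa [heads] using fun a ha => (mem_contractArc_A.mp (hF ha)).2.2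

lemma heads_contractArc {F : Finset ℕ} (hF : F ⊆ (D.contractArc e).A) :
    (D.contractArc e).heads F = D.heads F :=
  image_congr fun a ha => by simp [contractArc_ends_of_mem (hF ha)]

lemma tails_contractArc (F : Finset ℕ) :
    (D.contractArc e).tails F = (D.tails F).image (identify (D.ends e).1 (D.ends e).2) := by
  simp only [tails, image_image]
  exact image_congr fun a _ => by simp [contractArc_ends]

lemma IsCycle.erase_contractArc {C : Finset ℕ} {k : ℕ} (hne : ¬ D.IsLoop e)
    (h : IsCycle D C k) (heC : e ∈ C) : IsCycle (D.contractArc e) (C.erase e) (k - 1) := by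
  set u := (D.ends e).1
  set v := (D.ends e).2
  have huv : u ≠ v := hne
  obtain ⟨w, a, hp, rfl, hlast⟩ := h.exists_param_last heC
  obtain ⟨n, rfl⟩ : ∃ n, k = n + 1 := ⟨k - 1, by have := h.1; omega⟩
  simp only [Nat.add_sub_cancel] at hlast ⊢
  have hends : D.ends e = (w n, w 0) := by rw [← hlast, hp.ends_eq n (by omega), hp.closed]
  have hwn : w n = u := by simp [u, hends]
  have hw0 : w 0 = v := by simp [v, hends]
  have hn : 1 ≤ n := Nat.pos_of_ne_zero fun hn0 => huv (by rw [← hwn, ← hw0, hn0])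
  have hwu : ∀ i < n, w i ≠ u := fun i hi hwi =>
    hi.ne (hp.injOn_vert (show i < n + 1 by omega) (show n < n + 1 by omega) (hwi.trans hwn.symm))
  have hwv : ∀ i < n, w (i + 1) ≠ v := fun i hi hwi =>
    i.succ_ne_zero (hp.injOn_vert (show i + 1 < n + 1 by omega) (show 0 < n + 1 by omega)
      (hwi.trans hw0.symm))
  have himage : (range n).image a = ((range (n + 1)).image a).erase e := by
    rw [range_add_one, image_insert, hlast, erase_insert]
    intro hmem
    obtain ⟨i, hi, hai⟩ := mem_image.mp hmem
    exact (mem_range.mp hi).ne (hp.injOn_arc (show i < n + 1 by simp at hi; omega)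
      (show n < n + 1 by omega) (hai.trans hlast.symm))
  rw [← himage]
  refine IsCycleParam.isCycle (v := fun i => identify u v (w i))
    ⟨identify_injOn.comp (hp.injOn_vert.mono (Set.Iio_subset_Iio (by omega))) hwu,
      hp.injOn_arc.mono (Set.Iio_subset_Iio (by omega)), fun i hi => ?_, fun i hi => ?_, ?_⟩ hn
  · have hi' := hp.ends_eq i (by omega)
    exact mem_contractArc_A.mpr ⟨hp.mem_A i (by omega), by rw [hi']; exact hwu i hi,
      by rw [hi']; exact hwv i hi⟩
  · rw [contractArc_ends, hp.ends_eq i (by omega)]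
  · simp [hwn, hw0, identify_of_ne huv]

lemma IsCycle.mem_heads_erase (hne : ¬ D.IsLoop e) {C : Finset ℕ} {k : ℕ} (h : IsCycle D C k)
    (heC : e ∈ C) : (D.ends e).1 ∈ D.heads (C.erase e) := by
  have hu : (D.ends e).1 ∈ D.heads C := h.tails_eq_heads ▸ mem_image_of_mem _ heC
  obtain ⟨a, haC, hau⟩ := mem_image.mp hu
  exact mem_image.mpr ⟨a, mem_erase.mpr ⟨fun hae => hne (hae ▸ hau).symm, haC⟩, hau⟩

lemma IsCycleParam.ends_of_contractArc {n : ℕ} {w b : ℕ → ℕ}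
    (hp : IsCycleParam (D.contractArc e) (n + 1) w b) (hw0 : w 0 = (D.ends e).1) {i : ℕ}
    (hi : i < n + 1) : D.ends (b i) = (if i = 0 then (D.ends e).2 else w i, w (i + 1)) := by
  have hb := mem_contractArc_A.mp (hp.mem_A i hi)
  have hends := hp.ends_eq i hi
  rw [contractArc_ends_of_mem (hp.mem_A i hi), Prod.mk.injEq] at hends
  refine Prod.ext ?_ hends.2
  have htail := hends.1
  unfold identify at htail
  split_ifs at htail ⊢ with hi0 htv htv
  · exact htv
  · exact absurd (htail.trans (hi0 ▸ hw0)) hb.2.1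
  · exact absurd (hp.injOn_vert (show 0 < n + 1 by omega) hi (hw0.trans htail)) (Ne.symm hi0)
  · exact htail

/-- Appending `e = (u, v)` to a cycle of `D_{/e}` that starts at `u` gives a cycle of `D`. -/
lemma IsCycleParam.extend_of_contractArc {n : ℕ} {w b : ℕ → ℕ} (he : e ∈ D.A)
    (hp : IsCycleParam (D.contractArc e) (n + 1) w b) (hw0 : w 0 = (D.ends e).1) :
    IsCycleParam D (n + 2) (fun i => if i = 0 ∨ i = n + 2 then (D.ends e).2 else w i)
      (fun i => if i = n + 1 then e else b i) := by
  set p : ℕ → ℕ := fun i => if i = 0 ∨ i = n + 2 then (D.ends e).2 else w i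
  have hends : ∀ i < n + 1, D.ends (b i) = (p i, p (i + 1)) := fun i hi => by
    rw [hp.ends_of_contractArc hw0 hi]
    simp only [p, show i ≠ n + 2 by omega, or_false, show i + 1 ≠ 0 by omega, false_or]
    rw [if_neg (show i + 1 ≠ n + 2 by omega)]
  have hpn : p (n + 1) = (D.ends e).1 := by simp [p, ← hw0, hp.closed]
  have hpu : ∀ i < n + 1, p i ≠ (D.ends e).1 := fun i hi hpi =>
    (mem_contractArc_A.mp (hp.mem_A i hi)).2.1 (by rw [hends i hi, hpi])
  have hbe : ∀ i < n + 1, b i ≠ e := fun i hi hbi =>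
    (mem_contractArc_A.mp (hp.mem_A i hi)).2.1 (by rw [hbi])
  refine ⟨fun i hi j hj hij => ?_, fun i hi j hj hij => ?_, fun i hi => ?_, fun i hi => ?_,
    by simp [p]⟩
  · simp only [Set.mem_Iio] at hi hj
    have hσ : ∀ m < n + 1, identify (D.ends e).1 (D.ends e).2 (p m) = w m := fun m hm => by
      have hm' := hp.ends_eq m hm
      rw [contractArc_ends_of_mem (hp.mem_A m hm), hends m hm, Prod.mk.injEq] at hm'
      exact hm'.1
    rcases eq_or_ne i (n + 1) with rfl | hi' <;> rcases eq_or_ne j (n + 1) with rfl | hj'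
    · rfl
    · exact absurd (hij.symm.trans hpn) (hpu j (by omega))
    · exact absurd (hij.trans hpn) (hpu i (by omega))
    · exact hp.injOn_vert (show i < n + 1 by omega) (show j < n + 1 by omega)
        (by rw [← hσ i (by omega), ← hσ j (by omega), hij])
  · simp only [Set.mem_Iio] at hi hj
    split_ifs at hij with hi' hj' hj'
    · omega
    · exact absurd hij.symm (hbe j (by omega))
    · exact absurd hij (hbe i (by omega))
    · exact hp.injOn_arc (show i < n + 1 by omega) (show j < n + 1 by omega) hij
  · split_ifs with hi'
    exacts [he, (mem_contractArc_A.mp (hp.mem_A i (by omega))).1]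
  · split_ifs with hi'
    · subst hi'
      exact Prod.ext hpn.symm (by simp [p])
    · exact hends i (by omega)

lemma IsCycle.insert_of_contractArc {C : Finset ℕ} {k : ℕ} (he : e ∈ D.A)
    (h : IsCycle (D.contractArc e) C k) (hu : (D.ends e).1 ∈ D.heads C) :
    IsCycle D (insert e C) (k + 1) := by
  obtain ⟨x, hxC, hxu⟩ := mem_image.mp hu
  obtain ⟨w, b, hp, rfl, hlast⟩ := h.exists_param_last hxC
  obtain ⟨n, rfl⟩ : ∃ n, k = n + 1 := ⟨k - 1, by have := h.1; omega⟩
  simp only [Nat.add_sub_cancel] at hlast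
  have hw0 : w 0 = (D.ends e).1 := by
    have hn := hp.ends_eq n (by omega)
    rw [contractArc_ends_of_mem (hp.mem_A n (by omega)), hlast, hxu, Prod.mk.injEq] at hn
    rw [← hp.closed, hn.2]
  have himage : (range (n + 2)).image (fun i => if i = n + 1 then e else b i) =
      insert e ((range (n + 1)).image b) := by
    rw [range_add_one, image_insert, if_pos rfl]
    exact congrArg _ (image_congr fun i hi => if_neg (mem_range.mp hi).ne)
  rw [← himage]
  exact (hp.extend_of_contractArc he hw0).isCycle (by omega)

lemma IsCycle.contractArc_of_subset {C : Finset ℕ} {k : ℕ} (h : IsCycle D C k)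
    (hC : C ⊆ (D.contractArc e).A) :
    IsCycle (D.contractArc e) C k ∧ (D.ends e).1 ∉ D.heads C := by
  have hv : (D.ends e).2 ∉ D.tails C :=
    h.tails_eq_heads ▸ notMem_heads_of_subset_contractArc_A hC
  refine ⟨h.congr hC fun a ha => ?_,
    h.tails_eq_heads ▸ notMem_tails_of_subset_contractArc_A hC⟩
  rw [contractArc_ends_of_mem (hC ha),
    identify_of_ne fun hav => hv (mem_image.mpr ⟨a, ha, hav⟩)]

lemma IsCycle.of_contractArc {C : Finset ℕ} {k : ℕ} (h : IsCycle (D.contractArc e) C k)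
    (hu : (D.ends e).1 ∉ D.heads C) : IsCycle D C k := by
  have hC := h.subset_A
  rw [← heads_contractArc hC, ← h.tails_eq_heads, tails_contractArc] at hu
  refine h.congr (fun a ha => (mem_contractArc_A.mp (hC ha)).1) fun a ha => ?_
  have hav : (D.ends a).1 ≠ (D.ends e).2 := fun hav =>
    hu (mem_image.mpr ⟨_, mem_image_of_mem _ ha, by rw [hav, identify_right]⟩)
  rw [contractArc_ends_of_mem (hC ha), identify_of_ne hav]

/-- Contraction maps the cycles through `e` to the cycles of `D_{/e}` entering `u`, and leaves
the other cycles unchanged. -/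
lemma kcF_insert_of_not_isLoop {F : Finset ℕ} (he : e ∈ D.A) (hne : ¬ D.IsLoop e)
    (hF : F ⊆ (D.contractArc e).A) : kcF D (insert e F) = kcF (D.contractArc e) F := by
  have heF : e ∉ F := fun heF => (mem_contractArc_A.mp (hF heF)).2.1 rfl
  unfold kcF
  refine card_nbij' (fun C => C.erase e)
    (fun C => if (D.ends e).1 ∈ D.heads C then insert e C else C) ?_ ?_ ?_ ?_
  · intro C hC
    simp only [mem_coe, mem_filter, mem_powerset] at hC ⊢
    obtain ⟨hCF, k, hk⟩ := hC
    refine ⟨fun a ha => (mem_insert.mp (hCF (mem_of_mem_erase ha))).resolve_left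
      (ne_of_mem_erase ha), ?_⟩
    by_cases heC : e ∈ C
    · exact ⟨k - 1, hk.erase_contractArc hne heC⟩
    · rw [erase_eq_of_notMem heC]
      exact ⟨k, (hk.contractArc_of_subset
        (((subset_insert_iff_of_notMem heC).mp hCF).trans hF)).1⟩
  · intro C hC
    simp only [mem_coe, mem_filter, mem_powerset] at hC ⊢
    obtain ⟨hCF, k, hk⟩ := hC
    split_ifs with hu
    · exact ⟨insert_subset_insert e hCF, k + 1, hk.insert_of_contractArc he hu⟩
    · exact ⟨hCF.trans (subset_insert e F), k, hk.of_contractArc hu⟩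
  · intro C hC
    simp only [mem_coe, mem_filter, mem_powerset] at hC
    obtain ⟨hCF, k, hk⟩ := hC
    dsimp only
    by_cases heC : e ∈ C
    · rw [if_pos (hk.mem_heads_erase hne heC), insert_erase heC]
    · have hCF' := (subset_insert_iff_of_notMem heC).mp hCF
      rw [erase_eq_of_notMem heC, if_neg (hk.contractArc_of_subset (hCF'.trans hF)).2]
  · intro C hC
    have heC : e ∉ C := fun heC => heF ((mem_powerset.mp (mem_filter.mp hC).1) heC)
    dsimp only
    split_ifs
    exacts [erase_insert heC, erase_eq_of_notMem heC]

lemma kcF_insert_of_isLoop {F : Finset ℕ} (he : e ∈ D.A) (hl : D.IsLoop e) (heF : e ∉ F) :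
    kcF D (insert e F) = kcF D F + 1 := by
  unfold kcF
  have hcycles : (insert e F).powerset.filter (fun C => ∃ k, IsCycle D C k) =
      insert {e} (F.powerset.filter fun C => ∃ k, IsCycle D C k) := by
    ext C
    simp only [mem_filter, mem_powerset, mem_insert]
    constructor
    · rintro ⟨hC, k, hk⟩
      by_cases heC : e ∈ C
      · exact Or.inl (hk.eq_singleton_of_isLoop heC hl)
      · exact Or.inr ⟨(subset_insert_iff_of_notMem heC).mp hC, k, hk⟩
    · rintro (rfl | ⟨hC, hk⟩)
      · exact ⟨singleton_subset_iff.mpr (mem_insert_self e F), 1,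
          isCycle_singleton_of_isLoop he hl⟩
      · exact ⟨hC.trans (subset_insert e F), hk⟩
  rw [hcycles, card_insert_of_notMem]
  simp [heF]

lemma kpF_insert_of_isLoop {F : Finset ℕ} (hl : D.IsLoop e) (hu : (D.ends e).1 ∉ D.tails F) :
    kpF D (insert e F) = kpF D F := by
  rw [kpF_eq_card_sdiff, kpF_eq_card_sdiff, tails_insert, heads_insert, ← hl,
    insert_sdiff_insert, sdiff_insert_of_notMem hu]

lemma mem_extractArc_A {a : ℕ} : a ∈ (D.extractArc e).A ↔ a ∈ D.A ∧
    (D.ends a).1 ≠ (D.ends e).1 ∧ (D.ends a).1 ≠ (D.ends e).2 ∧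
    (D.ends a).2 ≠ (D.ends e).1 ∧ (D.ends a).2 ≠ (D.ends e).2 :=
  mem_filter

lemma subset_extractArc_A_iff {F : Finset ℕ} (hF : F ⊆ (D.contractArc e).A) :
    F ⊆ (D.extractArc e).A ↔ (D.ends e).1 ∉ D.heads F ∧ (D.ends e).2 ∉ D.tails F := by
  simp only [subset_iff, mem_extractArc_A, heads, tails, mem_image, not_exists, not_and]
  constructor
  · intro h
    exact ⟨fun a ha => (h ha).2.2.2.1, fun a ha => (h ha).2.2.1⟩
  · intro h a ha
    have ha' := mem_contractArc_A.mp (hF ha)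
    exact ⟨ha'.1, ha'.2.1, h.2 a ha, h.1 a ha, ha'.2.2⟩

/-- The path component of `e` survives the contraction unless `e` is all of it. -/
lemma kpF_insert_of_not_isLoop {F : Finset ℕ} (hne : ¬ D.IsLoop e)
    (hF : F ⊆ (D.contractArc e).A) :
    kpF D (insert e F) =
      kpF (D.contractArc e) F + if F ⊆ (D.extractArc e).A then 1 else 0 := by
  rw [kpF_eq_card_sdiff, kpF_eq_card_sdiff, tails_insert, heads_insert, tails_contractArc,
    heads_contractArc hF,
    card_insert_sdiff_insert_identify hne (notMem_tails_of_subset_contractArc_A hF)]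
  simp only [subset_extractArc_A_iff hF]

lemma erase_subset_contractArc_A {F : Finset ℕ} (hF : F ⊆ D.A) (hdeg : DegOK D F)
    (heF : e ∈ F) : F.erase e ⊆ (D.contractArc e).A := by
  rw [degOK_iff_injOn] at hdeg
  intro a ha
  obtain ⟨hae, haF⟩ := mem_erase.mp ha
  exact mem_contractArc_A.mpr ⟨hF haF, fun h => hae (hdeg.1 haF heF h),
    fun h => hae (hdeg.2 haF heF h)⟩

lemma degOK_contractArc_iff {F : Finset ℕ} (hF : F ⊆ (D.contractArc e).A) :
    DegOK (D.contractArc e) F ↔ DegOK D F := by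
  have hends : ∀ a ∈ F, (D.contractArc e).ends a =
      (identify (D.ends e).1 (D.ends e).2 (D.ends a).1, (D.ends a).2) :=
    fun a ha => contractArc_ends_of_mem (hF ha)
  have htails : Set.InjOn (fun a => ((D.contractArc e).ends a).1) F ↔
      Set.InjOn (fun a => (D.ends a).1) F := by
    rw [Set.EqOn.injOn_iff (f₂ := identify (D.ends e).1 (D.ends e).2 ∘ fun a => (D.ends a).1)
      fun a ha => by simp [hends a ha]]
    exact ⟨Set.InjOn.of_comp, fun h => identify_injOn.comp h
      fun a ha => (mem_contractArc_A.mp (hF ha)).2.1⟩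
  rw [degOK_iff_injOn, degOK_iff_injOn]
  exact and_congr htails (Set.EqOn.injOn_iff fun a ha => by simp [hends a ha])

lemma degOK_insert_iff {F : Finset ℕ} (hF : F ⊆ (D.contractArc e).A) :
    DegOK D (insert e F) ↔ DegOK D F := by
  have heF : e ∉ F := fun heF => (mem_contractArc_A.mp (hF heF)).2.1 rfl
  simp only [degOK_iff_injOn, coe_insert, Set.injOn_insert (mem_coe.not.mpr heF)]
  have hu := notMem_tails_of_subset_contractArc_A hF
  have hv := notMem_heads_of_subset_contractArc_A hF
  simp only [tails, heads, ← coe_image, mem_coe] at hu hv ⊢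
  tauto

end contractArc

noncomputable def degOKSets (D : MDigraph) : Finset (Finset ℕ) :=
  D.A.powerset.filter fun F => DegOK D F

noncomputable def triWeight (D : MDigraph) (F : Finset ℕ) : MvPolynomial (Fin 3) ℝ :=
  X 0 ^ #F * X 1 ^ kcF D F * X 2 ^ kpF D F

lemma triPoly_eq_sum (D : MDigraph) : D.triPoly = ∑ F ∈ D.degOKSets, D.triWeight F := rfl

lemma mem_degOKSets {D : MDigraph} {F : Finset ℕ} :
    F ∈ D.degOKSets ↔ F ⊆ D.A ∧ DegOK D F := by
  rw [degOKSets, mem_filter, mem_powerset]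

lemma triWeight_congr {D D' : MDigraph} {F : Finset ℕ} (hA : F ⊆ D.A) (hA' : F ⊆ D'.A)
    (h : ∀ a ∈ F, D.ends a = D'.ends a) : D.triWeight F = D'.triWeight F := by
  rw [triWeight, triWeight, kcF_congr hA hA' h, kpF_congr h]

lemma triPoly_eq_one_of_A_eq_empty {D : MDigraph} (hD : D.A = ∅) : D.triPoly = 1 := by
  have hkc : kcF D ∅ = 0 := by
    simp only [kcF, powerset_empty, card_eq_zero, filter_eq_empty_iff, mem_singleton]
    rintro _ rfl ⟨k, hk, v, a, -, -, -, h⟩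
    exact (image_nonempty.mpr (nonempty_range_iff.mpr (by omega))).ne_empty h.symm
  have hdeg : DegOK D ∅ := fun w => by simp
  rw [triPoly_eq_sum, degOKSets, hD, powerset_empty, filter_singleton, if_pos hdeg,
    sum_singleton, triWeight, hkc, kpF_eq_card_sdiff]
  simp [tails]

section recurrence

variable {D : MDigraph} {e : ℕ}

lemma sum_degOKSets_filter_notMem :
    ∑ F ∈ D.degOKSets.filter (e ∉ ·), D.triWeight F = (D.delArc e).triPoly := by
  have hsets : D.degOKSets.filter (e ∉ ·) = (D.delArc e).degOKSets := by
    ext F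
    simp only [mem_filter, mem_degOKSets, delArc, subset_erase]
    tauto
  rw [hsets, triPoly_eq_sum]
  exact sum_congr rfl fun F hF =>
    triWeight_congr ((mem_degOKSets.mp hF).1.trans (erase_subset e D.A)) (mem_degOKSets.mp hF).1
      fun _ _ => rfl

lemma sum_degOKSets_filter_mem {M : Type*} [AddCommMonoid M] (he : e ∈ D.A)
    (g : Finset ℕ → M) :
    ∑ F ∈ D.degOKSets.filter (e ∈ ·), g F =
      ∑ F ∈ (D.contractArc e).degOKSets, g (insert e F) := by
  refine sum_nbij' (fun F => F.erase e) (fun F => insert e F) (fun F hF => ?_) (fun F hF => ?_)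
    (fun F hF => ?_) (fun F hF => ?_) (fun F hF => ?_)
  · simp only [mem_filter, mem_degOKSets] at hF ⊢
    have hsub := erase_subset_contractArc_A hF.1.1 hF.1.2 hF.2
    exact ⟨hsub, (degOK_contractArc_iff hsub).mpr (hF.1.2.mono (erase_subset e F))⟩
  · simp only [mem_filter, mem_degOKSets] at hF ⊢
    exact ⟨⟨insert_subset he fun a ha => (mem_contractArc_A.mp (hF.1 ha)).1,
      (degOK_insert_iff hF.1).mpr ((degOK_contractArc_iff hF.1).mp hF.2)⟩, mem_insert_self e F⟩
  · exact insert_erase (mem_filter.mp hF).2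
  · exact erase_insert fun heF => (mem_contractArc_A.mp ((mem_degOKSets.mp hF).1 heF)).2.1 rfl
  · rw [insert_erase (mem_filter.mp hF).2]

lemma triWeight_insert_of_isLoop (he : e ∈ D.A) (hl : D.IsLoop e) {F : Finset ℕ}
    (hF : F ⊆ (D.contractArc e).A) :
    D.triWeight (insert e F) = X 0 * X 1 * (D.contractArc e).triWeight F := by
  have heF : e ∉ F := fun heF => (mem_contractArc_A.mp (hF heF)).2.1 rfl
  have hends : ∀ a ∈ F, D.ends a = (D.contractArc e).ends a := fun a _ => by
    rw [contractArc_ends, ← hl, identify_same, identify_same]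
  rw [← triWeight_congr (fun a ha => (mem_contractArc_A.mp (hF ha)).1) hF hends,
    triWeight, triWeight, card_insert_of_notMem heF, kcF_insert_of_isLoop he hl heF,
    kpF_insert_of_isLoop hl (notMem_tails_of_subset_contractArc_A hF)]
  ring

lemma triWeight_insert_of_not_isLoop (he : e ∈ D.A) (hne : ¬ D.IsLoop e) {F : Finset ℕ}
    (hF : F ⊆ (D.contractArc e).A) :
    D.triWeight (insert e F) =
      X 0 * (D.contractArc e).triWeight F * if F ⊆ (D.extractArc e).A then X 2 else 1 := by
  have heF : e ∉ F := fun heF => (mem_contractArc_A.mp (hF heF)).2.1 rfl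
  rw [triWeight, triWeight, card_insert_of_notMem heF, kcF_insert_of_not_isLoop he hne hF,
    kpF_insert_of_not_isLoop hne hF]
  split_ifs <;> ring

lemma sum_degOKSets_contractArc_filter_subset :
    ∑ F ∈ (D.contractArc e).degOKSets.filter (· ⊆ (D.extractArc e).A),
      (D.contractArc e).triWeight F = (D.extractArc e).triPoly := by
  have hsub : (D.extractArc e).A ⊆ (D.contractArc e).A := fun a ha =>
    have ha' := mem_extractArc_A.mp ha
    mem_contractArc_A.mpr ⟨ha'.1, ha'.2.1, ha'.2.2.2.2⟩
  have hsets : (D.contractArc e).degOKSets.filter (· ⊆ (D.extractArc e).A) =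
      (D.extractArc e).degOKSets := by
    ext F
    simp only [mem_filter, mem_degOKSets]
    constructor
    · rintro ⟨⟨hF, hdeg⟩, hFx⟩
      exact ⟨hFx, (degOK_contractArc_iff hF).mp hdeg⟩
    · rintro ⟨hFx, hdeg⟩
      exact ⟨⟨hFx.trans hsub, (degOK_contractArc_iff (hFx.trans hsub)).mpr hdeg⟩, hFx⟩
  rw [hsets, triPoly_eq_sum]
  refine sum_congr rfl fun F hF => triWeight_congr ((mem_degOKSets.mp hF).1.trans hsub)
    (mem_degOKSets.mp hF).1 fun a ha => ?_
  have ha' := mem_extractArc_A.mp ((mem_degOKSets.mp hF).1 ha)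
  rw [contractArc_ends, identify_of_ne ha'.2.2.1, identify_of_ne ha'.2.2.2.2]
  rfl

end recurrence

end MDigraph

open MDigraph Finset

theorem triPoly_recurrence_general (D : MDigraph)
    (e : ℕ) (he : e ∈ D.A) :
    (D.IsLoop e → D.triPoly = (D.delArc e).triPoly +
        MvPolynomial.X 0 * MvPolynomial.X 1 * (D.contractArc e).triPoly) ∧
      (¬ D.IsLoop e → D.triPoly = (D.delArc e).triPoly +
        MvPolynomial.X 0 * (D.contractArc e).triPoly +
        MvPolynomial.X 0 * (MvPolynomial.X 2 - 1) * (D.extractArc e).triPoly) ∧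
      (∀ D' : MDigraph, D'.A = ∅ → D'.triPoly = 1) := by
  refine ⟨fun hl => ?_, fun hne => ?_, fun D' hD' => triPoly_eq_one_of_A_eq_empty hD'⟩ <;>
    rw [triPoly_eq_sum D, ← sum_filter_not_add_sum_filter _ (e ∈ ·),
      sum_degOKSets_filter_notMem, sum_degOKSets_filter_mem he]
  · rw [sum_congr rfl fun F hF => triWeight_insert_of_isLoop he hl (mem_degOKSets.mp hF).1,
      ← mul_sum, ← triPoly_eq_sum]
  · rw [sum_congr rfl fun F hF => triWeight_insert_of_not_isLoop he hne (mem_degOKSets.mp hF).1,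
      sum_mul_ite_eq, sum_degOKSets_contractArc_filter_subset, ← triPoly_eq_sum, add_assoc]

/-- for an arc `e` of `D`: if `e` is a loop then
`σ̂π(D) = σ̂π(D_{-e}) + x·y·σ̂π(D_{/e})`; otherwise
`σ̂π(D) = σ̂π(D_{-e}) + x·σ̂π(D_{/e}) + x·(z−1)·σ̂π(D_{†e})`; moreover
`σ̂π(E_n) = 1` for every arc-less digraph. -/
theorem triPoly_recurrence (D : MDigraph) (hwf : D.WellFormed)
    (e : ℕ) (he : e ∈ D.A) :
    (D.IsLoop e → D.triPoly = (D.delArc e).triPoly +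
        MvPolynomial.X 0 * MvPolynomial.X 1 * (D.contractArc e).triPoly) ∧
      (¬ D.IsLoop e → D.triPoly = (D.delArc e).triPoly +
        MvPolynomial.X 0 * (D.contractArc e).triPoly +
        MvPolynomial.X 0 * (MvPolynomial.X 2 - 1) * (D.extractArc e).triPoly) ∧
      (∀ D' : MDigraph, D'.A = ∅ → D'.triPoly = 1) :=
  triPoly_recurrence_general D e he
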